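/- Let G be a connected false-twin-free graph different from K₂. If u and v are two distinct vertices of degree one, then there is a biclique containing u but not v (i.e., the sets of bicliques containing u and v differ). -/

import Mathlib

/-- A set of vertices inducing a complete bipartite subgraph (both sides nonempty). -/
def IsCompleteBipartiteSet {V : Type*} (G : SimpleGraph V) (B : Set V) : Prop :=
  ∃ X Y : Set V, X.Nonempty ∧ Y.Nonempty ∧ Disjoint X Y ∧ B = X ∪ Y ∧
    (∀ x ∈ X, ∀ y ∈ Y, G.Adj x y) ∧
    (∀ x ∈ X, ∀ x' ∈ X, ¬ G.Adj x x') ∧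
    (∀ y ∈ Y, ∀ y' ∈ Y, ¬ G.Adj y y')

/-- A biclique: a maximal set of vertices inducing a complete bipartite subgraph. -/
def IsBiclique {V : Type*} (G : SimpleGraph V) (B : Set V) : Prop :=
  IsCompleteBipartiteSet G B ∧
    ∀ B' : Set V, IsCompleteBipartiteSet G B' → B ⊆ B' → B' = B

/-- A vertex set that is a star: a center `c` adjacent to all other vertices of the set,
which are nonempty and pairwise non-adjacent (shape `K_{1,r}`, `r ≥ 1`). -/
def IsStarSet {V : Type*} (G : SimpleGraph V) (B : Set V) : Prop :=
  ∃ c ∈ B, (B \ {c}).Nonempty ∧ (∀ w ∈ B, w ≠ c → G.Adj c w) ∧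
    (∀ w ∈ B, ∀ z ∈ B, w ≠ c → z ≠ c → ¬ G.Adj w z)

/-- A graph is false-twin-free if no two distinct vertices have equal open neighborhoods. -/
def FalseTwinFree {V : Type*} (G : SimpleGraph V) : Prop :=
  ∀ u v : V, G.neighborSet u = G.neighborSet v → u = v

/-!
Let `w` be the unique neighbour of the leaf `u`. In a complete bipartite set containing `u`, the
side opposite to `u` lies in `N(u) = {w}`, so every other vertex of the set is adjacent to `w`.
If `v` were in such a set, then either `v = w`, making `uv` a component `K₂` of the connected
graph, or `N(v) = {w} = N(u)`, making `u, v` false twins. Hence any biclique extending the edge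
`uw` contains `u` but not `v`.
-/

namespace SimpleGraph

variable {V : Type*} {G : SimpleGraph V}

lemma neighborSet_eq_singleton_of_degree_eq_one {x y : V} [Fintype (G.neighborSet x)]
    (hx : G.degree x = 1) (hxy : G.Adj x y) : G.neighborSet x = {y} := by
  obtain ⟨z, -, hz⟩ := degree_eq_one_iff_existsUnique_adj.mp hx
  ext y'
  exact ⟨fun h => (hz y' h).trans (hz y hxy).symm, fun h => h ▸ hxy⟩

lemma Reachable.mem_of_adj_closed {S : Set V} (hS : ∀ x ∈ S, ∀ y, G.Adj x y → y ∈ S)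
    {a b : V} (ha : a ∈ S) (hab : G.Reachable a b) : b ∈ S := by
  obtain ⟨p⟩ := hab
  induction p with
  | nil => exact ha
  | cons h _ ih => exact ih (hS _ ha _ h)

lemma Connected.card_le_two_of_neighborSet_eq [Fintype V] (hconn : G.Connected) {u v : V}
    (hu : G.neighborSet u = {v}) (hv : G.neighborSet v = {u}) : Fintype.card V ≤ 2 := by
  classical
  have hclosed : ∀ x ∈ ({u, v} : Set V), ∀ y, G.Adj x y → y ∈ ({u, v} : Set V) := by
    rintro x (rfl | rfl) y hxy
    · exact Or.inr (hu ▸ hxy : y ∈ ({v} : Set V))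
    · exact Or.inl (hv ▸ hxy : y ∈ ({u} : Set V))
  have huniv : (Finset.univ : Finset V) ⊆ {u, v} := fun z _ => by
    simpa using (hconn.preconnected u z).mem_of_adj_closed hclosed (Set.mem_insert u _)
  exact (Finset.card_le_card huniv).trans Finset.card_le_two

end SimpleGraph

open SimpleGraph

section

variable {V : Type*} {G : SimpleGraph V}

lemma isCompleteBipartiteSet_pair {u w : V} (h : G.Adj u w) : IsCompleteBipartiteSet G {u, w} :=
  ⟨{u}, {w}, Set.singleton_nonempty u, Set.singleton_nonempty w,
    Set.disjoint_singleton.mpr h.ne, rfl, by simpa using h, by simp, by simp⟩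

lemma IsCompleteBipartiteSet.exists_isBiclique_superset [Finite V] {B : Set V}
    (hB : IsCompleteBipartiteSet G B) : ∃ B', IsBiclique G B' ∧ B ⊆ B' := by
  obtain ⟨B', hBB', hmax⟩ := Finite.exists_le_maximal hB
  exact ⟨B', ⟨hmax.prop, fun B'' hB'' h => (hmax.le_of_ge hB'' h).antisymm h⟩, hBB'⟩

lemma IsCompleteBipartiteSet.adj_of_neighborSet_eq_singleton {B : Set V}
    (hB : IsCompleteBipartiteSet G B) {u w x : V} (hu : u ∈ B) (hN : G.neighborSet u = {w})
    (hx : x ∈ B) (hxw : x ≠ w) : G.Adj x w := by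
  obtain ⟨X, Y, hX, hY, hXY, rfl, hadj, hXX, hYY⟩ := hB
  wlog huX : u ∈ X generalizing X Y
  · exact this Y X hY hX hXY.symm (Set.union_comm X Y ▸ hu) (Set.union_comm X Y ▸ hx)
      (fun y hy x hx => (hadj x hx y hy).symm) hYY hXX (hu.resolve_left huX)
  have hYw : ∀ y ∈ Y, y = w := fun y hy =>
    Set.mem_singleton_iff.mp (hN ▸ (hadj u huX y hy : y ∈ G.neighborSet u))
  obtain ⟨y, hy⟩ := hY
  rcases hx with hxX | hxY
  · exact hYw y hy ▸ hadj x hxX y hy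
  · exact absurd (hYw x hxY) hxw

end

/-- In a connected false-twin-free graph different from K₂, two distinct degree-one
vertices belong to different bicliques. -/
theorem degree_one_vertices_different_bicliques {V : Type*} [Fintype V]
    (G : SimpleGraph V) [DecidableRel G.Adj] (hconn : G.Connected)
    (hn : 3 ≤ Fintype.card V) (htf : FalseTwinFree G)
    (u v : V) (huv : u ≠ v) (hu : G.degree u = 1) (hv : G.degree v = 1) :
    ∃ B : Set V, IsBiclique G B ∧ u ∈ B ∧ v ∉ B := by
  obtain ⟨w, huw, -⟩ := degree_eq_one_iff_existsUnique_adj.mp hu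
  have hNu := neighborSet_eq_singleton_of_degree_eq_one hu huw
  obtain ⟨B, hB, hsub⟩ := (isCompleteBipartiteSet_pair huw).exists_isBiclique_superset
  refine ⟨B, hB, hsub (Set.mem_insert u _), fun hvB => ?_⟩
  have hvw : v ≠ w := by
    rintro rfl
    have := hconn.card_le_two_of_neighborSet_eq hNu
      (neighborSet_eq_singleton_of_degree_eq_one hv huw.symm)
    omega
  have hNv := neighborSet_eq_singleton_of_degree_eq_one hv
    (hB.1.adj_of_neighborSet_eq_singleton (hsub (Set.mem_insert u _)) hNu hvB hvw)
  exact huv (htf u v (hNu.trans hNv.symm))
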